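/- The median Genocchi numbers H_{2n+1} := g_{2n+1,1} (first entries of odd rows of the Seidel triangle) satisfy H_{2n+1} = (-1)^n L(s^n) for all n ≥ 0, where L is the linear functional with L(F_{2k+1}) = [k = 0]. -/

import Mathlib

/-!
Let `M` be the functional with moments `M(s^n) = (-1)^n H_{2n+1}`. Expanding `F_{2m+1}` and
`F_{2m+2}` by the Fibonacci recurrence and comparing with the Seidel recurrences shows, by
induction on `m`, that `M(s^n F_{2m+1})` and `M(s^n F_{2m+2})` are the signed entries
`g_{2(n+m), m+1}` and `g_{2(n+m)+1, m+1}`. At `n = 0, m ≥ 1` the first lies outside the triangle,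
so `M(F_{2k+1}) = [k = 0]`. Since `F_{2k+1}` is monic of degree `k`, these polynomials span `ℚ[s]`,
hence `L = M`.
-/

noncomputable def fibPoly : ℕ → Polynomial ℚ
  | 0 => 0
  | 1 => 1
  | n + 2 => fibPoly (n + 1) + Polynomial.X * fibPoly n

open Polynomial

lemma fibPoly_add_two (n : ℕ) :
    fibPoly (n + 2) = fibPoly (n + 1) + X * fibPoly n := rfl

lemma fibPoly_one : fibPoly 1 = 1 := rfl

lemma fibPoly_two : fibPoly 2 = 1 := by
  simp [fibPoly]

lemma natDegree_fibPoly_succ_le (n : ℕ) : (fibPoly (n + 1)).natDegree ≤ n / 2 := by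
  induction n using Nat.twoStepInduction with
  | zero => simp [fibPoly_one]
  | one => simp [fibPoly_two]
  | more n ih₀ ih₁ =>
    rw [fibPoly_add_two]
    refine natDegree_add_le_of_degree_le (ih₁.trans (by omega)) ?_
    exact natDegree_mul_le.trans (by rw [natDegree_X]; omega)

lemma coeff_fibPoly_two_mul_add_one (k : ℕ) : (fibPoly (2 * k + 1)).coeff k = 1 := by
  induction k with
  | zero => simp [fibPoly_one]
  | succ k ih =>
    have hlow : (fibPoly (2 * k + 2)).coeff (k + 1) = 0 :=
      coeff_eq_zero_of_natDegree_lt ((natDegree_fibPoly_succ_le (2 * k + 1)).trans_lt (by omega))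
    rw [show 2 * (k + 1) + 1 = 2 * k + 1 + 2 by ring, fibPoly_add_two, coeff_add, coeff_X_mul, hlow,
      ih, zero_add]

lemma degree_fibPoly_two_mul_add_one (k : ℕ) : (fibPoly (2 * k + 1)).degree = k := by
  refine degree_eq_of_le_of_coeff_ne_zero ?_ (by simp [coeff_fibPoly_two_mul_add_one])
  exact degree_le_of_natDegree_le ((natDegree_fibPoly_succ_le (2 * k)).trans (by omega))

lemma monic_fibPoly_two_mul_add_one (k : ℕ) : (fibPoly (2 * k + 1)).Monic := by
  rw [Monic, leadingCoeff, natDegree_eq_of_degree_eq_some (degree_fibPoly_two_mul_add_one k),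
    coeff_fibPoly_two_mul_add_one]

theorem span_range_fibPoly_two_mul_add_one :
    Submodule.span ℚ (Set.range fun k => fibPoly (2 * k + 1)) = ⊤ :=
  Sequence.span ⟨fun k => fibPoly (2 * k + 1), degree_fibPoly_two_mul_add_one⟩
    fun k => (monic_fibPoly_two_mul_add_one k).leadingCoeff ▸ isUnit_one

section SeidelMoments

variable {g : ℕ → ℕ → ℚ} {M : ℚ[X] →ₗ[ℚ] ℚ}

/-- The guard `0 < n + m` excludes `M(F_1) = 1`, which the triangle would give as `g_{0,1} = 0`. -/
theorem moment_X_pow_mul_fibPoly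
    (hzero : ∀ i j : ℕ, j = 0 ∨ (i + 1) / 2 < j → g i j = 0)
    (hodd : ∀ i : ℕ, 1 ≤ i → ∀ j : ℕ, 1 ≤ j → j ≤ i + 1 →
      g (2 * i + 1) j = g (2 * i + 1) (j - 1) + g (2 * i) j)
    (heven : ∀ i : ℕ, 1 ≤ i → ∀ j : ℕ, 1 ≤ j → j ≤ i →
      g (2 * i) j = g (2 * i) (j + 1) + g (2 * i - 1) j)
    (hM : ∀ n : ℕ, M (X ^ n) = (-1) ^ n * g (2 * n + 1) 1) (m : ℕ) :
    (∀ n, 0 < n + m → M (X ^ n * fibPoly (2 * m + 1)) = (-1) ^ (n + m) * g (2 * (n + m)) (m + 1)) ∧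
    ∀ n, M (X ^ n * fibPoly (2 * m + 2)) = (-1) ^ (n + m) * g (2 * (n + m) + 1) (m + 1) := by
  induction m with
  | zero =>
    refine ⟨fun n hn => ?_, fun n => by simp [fibPoly_two, hM]⟩
    simp only [mul_zero, zero_add, add_zero, fibPoly_one, mul_one, hM]
    rw [hodd n hn 1 le_rfl (by omega), hzero _ 0 (Or.inl rfl), zero_add]
  | succ m ih =>
    obtain ⟨ihOdd, ihEven⟩ := ih
    have hOdd : ∀ n, M (X ^ n * fibPoly (2 * (m + 1) + 1)) =
        (-1) ^ (n + (m + 1)) * g (2 * (n + (m + 1))) (m + 1 + 1) := by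
      intro n
      have hrec := heven (n + m + 1) (by omega) (m + 1) (by omega) (by omega)
      rw [show 2 * (n + m + 1) - 1 = 2 * (n + m) + 1 by omega] at hrec
      rw [show 2 * (m + 1) + 1 = 2 * m + 1 + 2 by ring, fibPoly_add_two, mul_add, ← mul_assoc,
        ← pow_succ, map_add, ihEven, ihOdd (n + 1) (by omega)]
      rw [show n + 1 + m = n + (m + 1) by ring, show n + (m + 1) = n + m + 1 by ring, hrec, pow_succ]
      ring
    refine ⟨fun n _ => hOdd n, fun n => ?_⟩
    have hrec := hodd (n + m + 1) (by omega) (m + 2) (by omega) (by omega)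
    rw [show m + 2 - 1 = m + 1 by omega] at hrec
    rw [fibPoly_add_two, mul_add, ← mul_assoc, ← pow_succ, map_add, hOdd,
      show 2 * (m + 1) = 2 * m + 2 by ring, ihEven (n + 1)]
    rw [show n + 1 + m = n + (m + 1) by ring, show n + (m + 1) = n + m + 1 by ring, hrec]
    ring

theorem moment_fibPoly_two_mul_add_one (h11 : g 1 1 = 1)
    (hzero : ∀ i j : ℕ, j = 0 ∨ (i + 1) / 2 < j → g i j = 0)
    (hodd : ∀ i : ℕ, 1 ≤ i → ∀ j : ℕ, 1 ≤ j → j ≤ i + 1 →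
      g (2 * i + 1) j = g (2 * i + 1) (j - 1) + g (2 * i) j)
    (heven : ∀ i : ℕ, 1 ≤ i → ∀ j : ℕ, 1 ≤ j → j ≤ i →
      g (2 * i) j = g (2 * i) (j + 1) + g (2 * i - 1) j)
    (hM : ∀ n : ℕ, M (X ^ n) = (-1) ^ n * g (2 * n + 1) 1) (k : ℕ) :
    M (fibPoly (2 * k + 1)) = if k = 0 then 1 else 0 := by
  cases k with
  | zero => simpa [fibPoly_one, h11] using hM 0
  | succ k =>
    have h := (moment_X_pow_mul_fibPoly hzero hodd heven hM (k + 1)).1 0 (by omega)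
    rwa [pow_zero, one_mul, hzero _ _ (Or.inr (by omega)), mul_zero] at h

end SeidelMoments

theorem stmt11_general (g : ℕ → ℕ → ℚ)
    (h11 : g 1 1 = 1)
    (hzero : ∀ i j : ℕ, j = 0 ∨ (i + 1) / 2 < j → g i j = 0)
    (hodd : ∀ i : ℕ, 1 ≤ i → ∀ j : ℕ, 1 ≤ j → j ≤ i + 1 →
      g (2 * i + 1) j = g (2 * i + 1) (j - 1) + g (2 * i) j)
    (heven : ∀ i : ℕ, 1 ≤ i → ∀ j : ℕ, 1 ≤ j → j ≤ i →
      g (2 * i) j = g (2 * i) (j + 1) + g (2 * i - 1) j)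
    (L : Polynomial ℚ →ₗ[ℚ] ℚ)
    (hL : ∀ k : ℕ, L (fibPoly (2 * k + 1)) = if k = 0 then 1 else 0)
    (n : ℕ) :
    g (2 * n + 1) 1 = (-1) ^ n * L (Polynomial.X ^ n) := by
  set M := (basisMonomials ℚ).constr ℚ fun n => (-1) ^ n * g (2 * n + 1) 1
  have hM : ∀ n : ℕ, M (X ^ n) = (-1) ^ n * g (2 * n + 1) 1 := fun n => by
    simpa [X_pow_eq_monomial] using (basisMonomials ℚ).constr_basis ℚ _ n
  have hLM : L = M := LinearMap.ext_on_range span_range_fibPoly_two_mul_add_one fun k => by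
    rw [hL, moment_fibPoly_two_mul_add_one h11 hzero hodd heven hM]
  rw [hLM, hM, ← mul_assoc, ← mul_pow]
  norm_num

/-- The median Genocchi numbers H_(2n+1) = g_(2n+1,1) satisfy H_(2n+1) = (-1)^n L(s^n). -/
theorem stmt11 (g : ℕ → ℕ → ℚ)
    (h11 : g 1 1 = 1) (h21 : g 2 1 = 1)
    (hzero : ∀ i j : ℕ, j = 0 ∨ (i + 1) / 2 < j → g i j = 0)
    (hodd : ∀ i : ℕ, 1 ≤ i → ∀ j : ℕ, 1 ≤ j → j ≤ i + 1 →
      g (2 * i + 1) j = g (2 * i + 1) (j - 1) + g (2 * i) j)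
    (heven : ∀ i : ℕ, 1 ≤ i → ∀ j : ℕ, 1 ≤ j → j ≤ i →
      g (2 * i) j = g (2 * i) (j + 1) + g (2 * i - 1) j)
    (L : Polynomial ℚ →ₗ[ℚ] ℚ)
    (hL : ∀ k : ℕ, L (fibPoly (2 * k + 1)) = if k = 0 then 1 else 0)
    (n : ℕ) :
    g (2 * n + 1) 1 = (-1) ^ n * L (Polynomial.X ^ n) :=
  stmt11_general g h11 hzero hodd heven L hL n
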